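/- Let R ⊆ ℤ be of the form R = (R⁰ ∪ A) \ B where A, B ⊆ ℤ are finite and disjoint with B ⊆ R⁰ and A ∩ R⁰ = ∅, and R⁰ is a finite union of cosets cᵢ + dℤ (d ≥ 1). Suppose every map x ↦ λx that preserves R (λ ∈ ℤ, λ ≠ 0, λR ⊆ R) also reflects it (λa ∈ R implies a ∈ R). If A = ∅ and 0 ∉ B, then B = ∅. Equivalently: if A = ∅ and B ≠ ∅, then B = {0}. -/

import Mathlib

/-!
With `A = ∅` we have `R = R⁰ \ B`. Any `λ ≡ 1 (mod d)` maps every coset `c + dℤ` into itself,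
so it preserves `R⁰`; if moreover `λ` exceeds every `|b|` with `b ∈ B`, then `λx ∉ B` for `x ≠ 0`,
so `x ↦ λx` preserves `R`. For `0 ≠ b ∈ B` we get `λb ∈ R`, and reflection gives the
contradiction `b ∈ R`.
-/

namespace Int

theorem mul_mem_iUnion_cosets {d lam x : ℤ} {cs : Finset ℤ} (hlam : d ∣ lam - 1)
    (hx : x ∈ ⋃ c ∈ cs, {y : ℤ | ∃ k : ℤ, y = c + d * k}) :
    lam * x ∈ ⋃ c ∈ cs, {y : ℤ | ∃ k : ℤ, y = c + d * k} := by
  obtain ⟨e, he⟩ := hlam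
  simp only [Set.mem_iUnion, Set.mem_ofPred_eq] at hx ⊢
  obtain ⟨c, hc, k, rfl⟩ := hx
  exact ⟨c, hc, e * (c + d * k) + k, by linear_combination (c + d * k) * he⟩

theorem exists_dvd_sub_one_abs_lt {d : ℤ} (hd : 1 ≤ d) (B : Finset ℤ) :
    ∃ lam : ℤ, d ∣ lam - 1 ∧ 0 < lam ∧ ∀ b ∈ B, |b| < lam := by
  set M : ℕ := B.sup natAbs
  refine ⟨1 + d * M, ⟨M, by ring⟩, by positivity, fun b hb => ?_⟩
  have hb : (b.natAbs : ℤ) ≤ M := by exact_mod_cast Finset.le_sup (f := natAbs) hb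
  rw [abs_eq_natAbs]
  nlinarith

theorem mul_notMem_of_abs_lt {lam x : ℤ} {B : Finset ℤ} (hB : ∀ b ∈ B, |b| < |lam|)
    (hx : x ≠ 0) : lam * x ∉ B := fun hmem => by
  have hlt := hB _ hmem
  rw [abs_mul] at hlt
  nlinarith [abs_nonneg lam, one_le_abs hx]

theorem mul_mem_sdiff {S : Set ℤ} {B : Finset ℤ} {lam : ℤ} (hS : ∀ x ∈ S, lam * x ∈ S)
    (hB : ∀ b ∈ B, |b| < |lam|) {x : ℤ} (hx : x ∈ S \ (B : Set ℤ)) :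
    lam * x ∈ S \ (B : Set ℤ) := by
  rcases eq_or_ne x 0 with rfl | hx0
  · simpa using hx
  · exact ⟨hS x hx.1, mul_notMem_of_abs_lt hB hx0⟩

theorem subset_zero_of_reflects {S : Set ℤ} {B : Finset ℤ} {lam : ℤ} (hBS : (B : Set ℤ) ⊆ S)
    (hS : ∀ x ∈ S, lam * x ∈ S) (hB : ∀ b ∈ B, |b| < |lam|)
    (hreflect : (∀ x ∈ S \ (B : Set ℤ), lam * x ∈ S \ (B : Set ℤ)) →
      ∀ a : ℤ, lam * a ∈ S \ (B : Set ℤ) → a ∈ S \ (B : Set ℤ)) :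
    B ⊆ {0} := by
  intro b hb
  by_contra hb0
  have hlamb : lam * b ∈ S \ (B : Set ℤ) :=
    ⟨hS b (hBS hb), mul_notMem_of_abs_lt hB (by simpa using hb0)⟩
  exact (hreflect (fun _ => mul_mem_sdiff hS hB) b hlamb).2 hb

end Int

theorem B_empty_of_A_empty_general (R R0 : Set ℤ) (A B : Finset ℤ) (cs : Finset ℤ) (d : ℤ)
    (hd : 1 ≤ d)
    (hR0 : R0 = ⋃ c ∈ cs, {x : ℤ | ∃ k : ℤ, x = c + d * k})
    (hB : (B : Set ℤ) ⊆ R0)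
    (hR : R = (R0 ∪ (A : Set ℤ)) \ (B : Set ℤ))
    (hcore : ∀ lam : ℤ, lam ≠ 0 → (∀ x ∈ R, lam * x ∈ R) →
      (∀ a : ℤ, lam * a ∈ R → a ∈ R)) :
    (A = ∅ ∧ (0 : ℤ) ∉ B → B = ∅) ∧ (A = ∅ ∧ B ≠ ∅ → B = {0}) := by
  suffices hB0 : A = ∅ → B ⊆ {0} by
    refine ⟨fun ⟨hA, h0⟩ => ?_, fun ⟨hA, hne⟩ => ?_⟩
    · exact (Finset.subset_singleton_iff.mp (hB0 hA)).resolve_right (by rintro rfl; simp at h0)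
    · exact (Finset.subset_singleton_iff.mp (hB0 hA)).resolve_left hne
  rintro rfl
  obtain ⟨lam, hlam, hlam_pos, hlamB⟩ := Int.exists_dvd_sub_one_abs_lt hd B
  rw [Finset.coe_empty, Set.union_empty] at hR
  subst hR hR0
  exact Int.subset_zero_of_reflects hB (fun _ => Int.mul_mem_iUnion_cosets hlam)
    (by simpa only [abs_of_pos hlam_pos]) (hcore lam hlam_pos.ne')

theorem B_empty_of_A_empty (R R0 : Set ℤ) (A B : Finset ℤ) (cs : Finset ℤ) (d : ℤ)
    (hd : 1 ≤ d)
    (hR0 : R0 = ⋃ c ∈ cs, {x : ℤ | ∃ k : ℤ, x = c + d * k})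
    (hdisj : Disjoint A B) (hB : (B : Set ℤ) ⊆ R0) (hA : (A : Set ℤ) ∩ R0 = ∅)
    (hR : R = (R0 ∪ (A : Set ℤ)) \ (B : Set ℤ))
    (hcore : ∀ lam : ℤ, lam ≠ 0 → (∀ x ∈ R, lam * x ∈ R) →
      (∀ a : ℤ, lam * a ∈ R → a ∈ R)) :
    (A = ∅ ∧ (0 : ℤ) ∉ B → B = ∅) ∧ (A = ∅ ∧ B ≠ ∅ → B = {0}) :=
  B_empty_of_A_empty_general R R0 A B cs d hd hR0 hB hR hcore
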